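/- Pushforward of Schur classes along Kempf–Laksov bundles: with E, E_•, μ, θ_μ and U as above, for any partition α = (α_1,…,α_d), (θ_μ)_*(s_α(U)) = det( s_{α_i − i + d + 1 − μ_j}(E_{μ_j}) )_{1≤i,j≤d}, where s_m(E_{μ_j}) denotes the m-th Segre class of E_{μ_j} (zero for m < 0). -/
import Mathlib


open MvPolynomial

/-- Composition `push_{e-1} ∘ ⋯ ∘ push_0 : B 0 → B e` of the Gysin maps along a chain of
bundles `F = Y_0 → Y_1 → ⋯ → Y_d = X` with Chow rings `B 0, …, B d`. -/
def iterPush (B : ℕ → Type*) [∀ e, CommRing (B e)] (push : ∀ e, B e →+ B (e + 1)) :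
    ∀ e, B 0 →+ B e
  | 0 => AddMonoidHom.id (B 0)
  | (e + 1) => (push e).comp (iterPush B push e)

/-- The complete homogeneous symmetric polynomial of degree `k` in `d` variables. -/
noncomputable def chs (d k : ℕ) : MvPolynomial (Fin d) ℤ :=
  ∑ m ∈ Finset.sym (Finset.univ : Finset (Fin d)) k, ((m : Multiset (Fin d)).map X).prod

/-- `hX x k`: the complete homogeneous function of degree `k` evaluated at the `d`-tuple `x`
(e.g. the Chern roots of `U^∨`), vanishing in negative degrees. -/
noncomputable def hX {A : Type*} [CommRing A] (d : ℕ) (x : Fin d → A) (k : ℤ) : A :=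
  if k < 0 then 0 else MvPolynomial.aeval x (chs d k.toNat)

section helpers
open Finset
variable {A : Type*} [CommRing A] {d : ℕ}
noncomputable def hS (x : Fin d → A) (T : Finset (Fin d)) (k : ℤ) : A :=
  if k < 0 then 0 else ∑ m ∈ T.sym k.toNat, ((m : Multiset (Fin d)).map x).prod

lemma hS_neg (x : Fin d → A) (T : Finset (Fin d)) {k : ℤ} (h : k < 0) : hS x T k = 0 :=
  if_pos h

lemma hS_zero (x : Fin d → A) (T : Finset (Fin d)) : hS x T 0 = 1 := by
  rw [hS, if_neg (by norm_num)]
  simp only [Int.toNat_zero, Finset.sym_zero, Finset.sum_singleton]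
  rfl

lemma hSN_insert (x : Fin d → A) {T : Finset (Fin d)} {a : Fin d} (ha : a ∉ T) (k : ℕ) :
    ∑ m ∈ (insert a T).sym (k+1), ((m : Multiset (Fin d)).map x).prod
      = x a * ∑ m ∈ (insert a T).sym k, ((m : Multiset (Fin d)).map x).prod
        + ∑ m ∈ T.sym (k+1), ((m : Multiset (Fin d)).map x).prod := by
  classical
  rw [← Finset.sum_filter_add_sum_filter_not ((insert a T).sym (k+1)) (fun m => a ∈ m)]
  congr 1
  · have himg : filter (fun m => a ∈ m) ((insert a T).sym (k+1))
        = ((insert a T).sym k).image (Sym.cons a) := by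
      ext m
      simp only [mem_filter, Finset.mem_image, Finset.mem_sym_iff]
      constructor
      · rintro ⟨hmem, ham⟩
        refine ⟨m.erase a ham, fun b hb => hmem b ?_, Sym.cons_erase ham⟩
        exact Multiset.mem_of_mem_erase hb
      · rintro ⟨m', hm', rfl⟩
        refine ⟨fun b hb => ?_, Sym.mem_cons_self a m'⟩
        rcases Sym.mem_cons.1 hb with rfl | hb
        · exact Finset.mem_insert_self _ _
        · exact hm' b hb
    rw [himg, Finset.sum_image (fun y _ z _ h => (Sym.cons_inj_right a y z).1 h), Finset.mul_sum]
    refine Finset.sum_congr rfl fun m _ => ?_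
    rw [Sym.coe_cons, Multiset.map_cons, Multiset.prod_cons]
  · congr 1
    ext m
    simp only [mem_filter, Finset.mem_sym_iff]
    constructor
    · rintro ⟨hmem, ham⟩ b hb
      rcases Finset.mem_insert.1 (hmem b hb) with rfl | h
      · exact absurd hb ham
      · exact h
    · intro h
      exact ⟨fun b hb => Finset.mem_insert_of_mem (h b hb), fun ham => ha (h a ham)⟩

lemma hS_insert (x : Fin d → A) {T : Finset (Fin d)} {a : Fin d} (ha : a ∉ T) (k : ℤ) :
    hS x (insert a T) k = x a * hS x (insert a T) (k-1) + hS x T k := by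
  rcases lt_trichotomy k 0 with h | rfl | h
  · rw [hS_neg x _ h, hS_neg x _ h, hS_neg x _ (by omega)]; ring
  · rw [hS_zero, hS_zero, hS_neg x _ (by norm_num)]; ring
  · obtain ⟨k', rfl⟩ : ∃ k' : ℕ, k = (k' : ℤ) + 1 := ⟨(k-1).toNat, by omega⟩
    rw [hS, hS, hS, if_neg (by omega), if_neg (by omega), if_neg (by omega)]
    have h1 : ((k' : ℤ) + 1).toNat = k' + 1 := by omega
    have h2 : ((k' : ℤ) + 1 - 1).toNat = k' := by omega
    rw [h1, h2]
    exact hSN_insert x ha k'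

open Finset

variable {A : Type*} [CommRing A] {d : ℕ}



lemma hS_expand (x : Fin d → A) {T : Finset (Fin d)} {a : Fin d} (ha : a ∉ T) :
    ∀ (N : ℕ) (k : ℤ), k < N →
      hS x (insert a T) k = ∑ m ∈ Finset.range N, (x a)^m * hS x T (k - m) := by
  intro N
  induction N with
  | zero => intro k hk; rw [Finset.range_zero, Finset.sum_empty, hS_neg x _ (by omega)]
  | succ N ih =>
    intro k hk
    rcases lt_or_ge k 0 with h | h
    · rw [hS_neg x _ h]
      refine (Finset.sum_eq_zero fun m _ => ?_).symm
      rw [hS_neg x _ (by omega), mul_zero]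
    · rw [hS_insert x ha k, ih (k-1) (by omega), Finset.sum_range_succ', Finset.mul_sum]
      simp only [pow_zero, one_mul, pow_succ, sub_zero]
      congr 1
      · refine Finset.sum_congr rfl fun m _ => ?_
        push_cast
        ring_nf
      · ring_nf

lemma eh_identity (x : Fin d → A) (T : Finset (Fin d)) (k : ℤ) :
    ∑ S ∈ T.powerset, (-1 : A)^S.card * (∏ i ∈ S, x i) * hS x T (k - S.card)
      = if k = 0 then 1 else 0 := by
  classical
  induction T using Finset.induction_on with
  | empty =>
    rw [Finset.powerset_empty, Finset.sum_singleton]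
    simp only [Finset.card_empty, pow_zero, Finset.prod_empty, one_mul, Nat.cast_zero, sub_zero]
    rcases lt_trichotomy k 0 with h | rfl | h
    · rw [hS_neg x _ h, if_neg (by omega)]
    · rw [hS_zero, if_pos rfl]
    · rw [if_neg (by omega), hS]
      rw [if_neg (by omega)]
      have : k.toNat = (k.toNat - 1) + 1 := by omega
      rw [this, Finset.sym_empty, Finset.sum_empty]
  | @insert a T ha ih =>
    rw [Finset.sum_powerset_insert ha]
    have key : ∀ S ∈ T.powerset,
        (-1 : A)^S.card * (∏ i ∈ S, x i) * hS x (insert a T) (k - S.card)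
          + ((-1 : A)^(insert a S).card * (∏ i ∈ insert a S, x i)
              * hS x (insert a T) (k - (insert a S).card))
        = (-1 : A)^S.card * (∏ i ∈ S, x i) * hS x T (k - S.card) := by
      intro S hS'
      have haS : a ∉ S := fun h => ha (Finset.mem_powerset.1 hS' h)
      rw [Finset.card_insert_of_notMem haS, Finset.prod_insert haS,
        hS_insert x ha (k - S.card)]
      push_cast
      ring_nf
    calc ∑ S ∈ T.powerset, (-1:A)^S.card * (∏ i ∈ S, x i) * hS x (insert a T) (k - S.card)
          + ∑ S ∈ T.powerset, (-1:A)^(insert a S).card * (∏ i ∈ insert a S, x i)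
              * hS x (insert a T) (k - (insert a S).card)
        = ∑ S ∈ T.powerset, (-1:A)^S.card * (∏ i ∈ S, x i) * hS x T (k - S.card) := by
          rw [← Finset.sum_add_distrib]
          exact Finset.sum_congr rfl key
      _ = if k = 0 then 1 else 0 := ih

lemma hS_map {A' : Type*} [CommRing A'] (g : A →+* A') (x : Fin d → A) (y : Fin d → A')
    (T : Finset (Fin d)) (hxy : ∀ i ∈ T, g (x i) = y i) (k : ℤ) :
    g (hS x T k) = hS y T k := by
  rcases lt_or_ge k 0 with h | h
  · rw [hS_neg x _ h, hS_neg y _ h, map_zero]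
  · rw [hS, hS, if_neg (by omega), if_neg (by omega), map_sum]
    refine Finset.sum_congr rfl fun m hm => ?_
    rw [map_multiset_prod, Multiset.map_map]
    congr 1
    apply Multiset.map_congr rfl
    intro b hb
    exact hxy b (Finset.mem_sym_iff.1 hm b hb)

open Finset

variable {A : Type*} [CommRing A] {d : ℕ}

lemma shift_sum (f : ℤ → A) (g : ℕ → A) (s N : ℕ)
    (hf : ∀ t : ℤ, t < 0 → f t = 0) (hg : ∀ m : ℕ, N ≤ m + s → g m = 0) :
    ∑ m ∈ Finset.range N, f ((m : ℤ) - s) * g m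
      = ∑ j ∈ Finset.range N, f j * g (j + s) := by
  rcases le_or_gt s N with h | h
  · have l1 : ∑ m ∈ Finset.range N, f ((m : ℤ) - s) * g m
        = ∑ m ∈ Finset.Ico s N, f ((m : ℤ) - s) * g m := by
      rw [Finset.range_eq_Ico, ← Finset.sum_Ico_consecutive _ (Nat.zero_le s) h]
      have : ∑ m ∈ Finset.Ico 0 s, f ((m : ℤ) - s) * g m = 0 := by
        refine Finset.sum_eq_zero fun m hm => ?_
        have := (Finset.mem_Ico.1 hm).2
        rw [hf _ (by omega), zero_mul]
      rw [this, zero_add]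
    have l2 : ∑ j ∈ Finset.range N, f j * g (j + s)
        = ∑ j ∈ Finset.range (N - s), f j * g (j + s) := by
      rw [Finset.range_eq_Ico, ← Finset.sum_Ico_consecutive _ (Nat.zero_le (N-s)) (by omega),
        ← Finset.range_eq_Ico]
      have : ∑ j ∈ Finset.Ico (N-s) N, f j * g (j + s) = 0 := by
        refine Finset.sum_eq_zero fun j hj => ?_
        have := (Finset.mem_Ico.1 hj).1
        rw [hg _ (by omega), mul_zero]
      rw [this, add_zero]
    rw [l1, l2, Finset.sum_Ico_eq_sum_range]
    refine Finset.sum_congr rfl fun j _ => ?_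
    have : ((s + j : ℕ) : ℤ) - (s:ℤ) = (j:ℤ) := by push_cast; ring
    rw [this, add_comm j s]
  · have l1 : ∀ m ∈ Finset.range N, f ((m:ℤ) - s) * g m = 0 := by
      intro m hm
      have := Finset.mem_range.1 hm
      rw [hf _ (by omega), zero_mul]
    have l2 : ∀ j ∈ Finset.range N, f j * g (j + s) = 0 := by
      intro j hj
      rw [hg _ (by omega), mul_zero]
    rw [Finset.sum_congr rfl l1, Finset.sum_congr rfl l2]

lemma det_updateCol_sum' {ι : Type*} (M : Matrix (Fin d) (Fin d) A) (j : Fin d)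
    (s : Finset ι) (v : ι → Fin d → A) :
    ∑ m ∈ s, (M.updateCol j (v m)).det
      = (M.updateCol j (fun i => ∑ m ∈ s, v m i)).det := by
  classical
  induction s using Finset.induction_on with
  | empty =>
    simp only [Finset.sum_empty]
    have : (fun i => (0:A)) = (0 : A) • (fun _ : Fin d => (0:A)) := by funext i; simp
    rw [this, Matrix.det_updateCol_smul, zero_mul]
  | @insert a s ha ih =>
    rw [Finset.sum_insert ha, ih]
    have h2 : (fun i => ∑ m ∈ insert a s, v m i)
        = (v a) + (fun i => ∑ m ∈ s, v m i) := by
      funext i; rw [Finset.sum_insert ha]; rfl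
    rw [h2, Matrix.det_updateCol_add]

lemma mu_lower {μ : Fin d → ℕ} (hμstrict : StrictAnti μ) (hμpos : ∀ i, 1 ≤ μ i)
    (i : Fin d) : d - (i : ℕ) ≤ μ i := by
  suffices h : ∀ m : ℕ, ∀ i : Fin d, (i:ℕ) + m = d - 1 → m + 1 ≤ μ i by
    have := h (d - 1 - i) i (by omega)
    omega
  intro m
  induction m with
  | zero => intro i _; exact hμpos i
  | succ m ih =>
    intro i hi
    have hlt : (i:ℕ) + 1 < d := by omega
    have := ih ⟨(i:ℕ)+1, hlt⟩ (by simp; omega)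
    have hmono := hμstrict (show i < ⟨(i:ℕ)+1, hlt⟩ by simp [Fin.lt_def])
    omega


lemma hX_eq_hS (x : Fin d → A) (k : ℤ) : hX d x k = hS x Finset.univ k := by
  unfold hX hS chs
  split_ifs with h
  · rfl
  · rw [map_sum]
    refine Finset.sum_congr rfl fun m _ => ?_
    rw [map_multiset_prod, Multiset.map_map]
    congr 1
    apply Multiset.map_congr rfl
    intro b _
    simp

end helpers

section main
open Finset
/-- The intermediate matrix at stage `e`. -/
noncomputable def Mmat {d : ℕ} {R : Type} [CommRing R] (μ : Fin d → ℕ) (Ξ : Fin d → R)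
    (sE : ℕ → ℤ → R) (α : Fin d → ℕ) (e : ℕ) : Matrix (Fin d) (Fin d) R :=
  Matrix.of fun i j =>
    if (j : ℕ) < e then sE (μ j) (((α i : ℤ) - (i : ℤ)) + (d : ℤ) - ((μ j : ℕ) : ℤ))
    else hS Ξ (Finset.univ.filter (fun i : Fin d => e ≤ (i : ℕ))) (((α i : ℤ) - (i : ℤ)) + ((j : ℕ) : ℤ))

theorem step_lemma (d : ℕ)
    (μ : Fin d → ℕ) (hμstrict : StrictAnti μ) (hμpos : ∀ i, 1 ≤ μ i)
    (B : ℕ → Type) [∀ e, CommRing (B e)]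
    (pull : ∀ e, B (e + 1) →+* B e) (push : ∀ e, B e →+ B (e + 1))
    (hproj : ∀ e x y, push e (x * pull e y) = push e x * y)
    (Ξ : ∀ e, Fin d → B e)
    (hΞ : ∀ e, ∀ i : Fin d, e + 1 ≤ (i : ℕ) → pull e (Ξ (e + 1) i) = Ξ e i)
    (sE : ∀ e, ℕ → ℤ → B e)
    (hsneg : ∀ e m k, k < 0 → sE e m k = 0)
    (hspull : ∀ e m k, pull e (sE (e + 1) m k) = sE e m k)
    (hGysin : ∀ (e : ℕ) (he : e < d) (k : ℕ),
      push e ((Ξ e ⟨e, he⟩) ^ k)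
        = ∑ S ∈ (Finset.univ.filter (fun i : Fin d => e + 1 ≤ (i : ℕ))).powerset,
            (-1 : B (e + 1)) ^ S.card * (∏ i ∈ S, Ξ (e + 1) i) *
              sE (e + 1) (μ ⟨e, he⟩)
                ((k : ℤ) - S.card - ((μ ⟨e, he⟩ : ℕ) : ℤ) + ((d - e - 1 : ℕ) : ℤ) + 1))
    (α : Fin d → ℕ) (e : ℕ) (he : e < d) :
    push e (Mmat μ (Ξ e) (sE e) α e).det = (Mmat μ (Ξ (e+1)) (sE (e+1)) α (e+1)).det := by
  classical
  set c : Fin d → ℤ := fun i => (α i : ℤ) - (i : ℤ) with hc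
  set T : ℕ → Finset (Fin d) := fun f => Finset.univ.filter (fun i : Fin d => f ≤ (i : ℕ)) with hT
  set N : ℕ := (Finset.univ.sup α) + 2*d + 2 with hN
  set a : Fin d := ⟨e, he⟩ with haa
  have hceq : ∀ i : Fin d, (α i : ℤ) - (i : ℤ) = c i := fun i => rfl
  have hTe : ∀ f, Finset.univ.filter (fun i : Fin d => f ≤ (i : ℕ)) = T f := fun f => rfl
  have hTi : T e = insert a (T (e+1)) := by
    ext i
    simp only [hT, Finset.mem_filter, Finset.mem_univ, true_and, Finset.mem_insert]
    constructor
    · intro h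
      rcases eq_or_lt_of_le h with h' | h'
      · left; exact Fin.ext h'.symm
      · right; omega
    · rintro (rfl | h)
      · exact le_refl _
      · omega
  have haT : a ∉ T (e+1) := by simp [hT, haa]
  have hμa : (d : ℤ) - (e : ℤ) ≤ ((μ a : ℕ) : ℤ) := by
    have := mu_lower hμstrict hμpos a
    simp only [haa] at this ⊢
    omega
  have hD : ((d - e - 1 : ℕ) : ℤ) = (d : ℤ) - (e : ℤ) - 1 := by omega
  have hNb : ∀ i : Fin d, c i + (e : ℤ) + (d : ℤ) < (N : ℤ) := by
    intro i
    have : α i ≤ Finset.univ.sup α := Finset.le_sup (Finset.mem_univ i)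
    simp only [hc, hN]
    push_cast
    omega
  -- the matrix after column operations
  set M' : Matrix (Fin d) (Fin d) (B e) := Matrix.of (fun i j =>
    if (j : ℕ) < e then sE e (μ j) (c i + (d : ℤ) - ((μ j : ℕ) : ℤ))
    else if (j : ℕ) = e then hS (Ξ e) (T e) (c i + ((j : ℕ) : ℤ))
    else hS (Ξ e) (T (e+1)) (c i + ((j : ℕ) : ℤ))) with hM'
  have stepA : (Mmat μ (Ξ e) (sE e) α e).det = M'.det := by
    obtain ⟨n', rfl⟩ : ∃ n', d = n' + 1 := ⟨d - 1, by omega⟩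
    refine Matrix.det_eq_of_forall_col_eq_smul_add_pred
      (fun j => if e ≤ (j : ℕ) then Ξ e a else 0) (fun i => ?_) (fun i j => ?_)
    · -- column 0
      by_cases h0 : 0 < e
      · simp only [Mmat, M', Matrix.of_apply, hceq, hTe]
        rw [if_pos (by simpa using h0), if_pos (by simpa using h0)]
      · have he0 : e = 0 := by omega
        simp only [Mmat, M', Matrix.of_apply, hceq, hTe, he0]
        norm_num
    · -- successor columns
      have hjs : ((j.succ : Fin (n'+1)) : ℕ) = (j : ℕ) + 1 := rfl
      have hjc : ((j.castSucc : Fin (n'+1)) : ℕ) = (j : ℕ) := rfl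
      rcases lt_trichotomy ((j : ℕ) + 1) e with h | h | h
      · simp only [Mmat, M', Matrix.of_apply, hjs, hceq, hTe]
        rw [if_pos (by omega), if_pos (by omega), if_neg (by omega), zero_mul, add_zero]
      · simp only [Mmat, M', Matrix.of_apply, hjs, hceq, hTe]
        rw [if_neg (by omega), if_neg (by omega), if_pos h, if_neg (by omega), zero_mul, add_zero]
      · simp only [Mmat, M', Matrix.of_apply, hjs, hjc, hceq, hTe]
        rw [if_neg (by omega), if_neg (by omega), if_neg (by omega), if_pos (by omega),
          if_neg (by omega)]
        rw [hTi, hS_insert (Ξ e) haT]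
        have harg : c i + (((j:ℕ) + 1 : ℕ) : ℤ) - 1 = c i + ((j:ℕ) : ℤ) := by push_cast; ring
        rw [harg]
        ring
  -- expansion data
  set v : ℕ → Fin d → B e := fun m i => hS (Ξ e) (T (e+1)) (c i + (e:ℤ) - (m:ℕ)) with hv
  set w : ℕ → Fin d → B (e+1) := fun m i => hS (Ξ (e+1)) (T (e+1)) (c i + (e:ℤ) - (m:ℕ)) with hw
  set NB : Matrix (Fin d) (Fin d) (B (e+1)) := Matrix.of (fun i j =>
    if (j : ℕ) < e then sE (e+1) (μ j) (c i + (d : ℤ) - ((μ j : ℕ) : ℤ))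
    else hS (Ξ (e+1)) (T (e+1)) (c i + ((j : ℕ) : ℤ))) with hNB
  set sc : ℕ → Finset (Fin d) → B (e+1) := fun m S =>
    (-1)^S.card * (∏ i ∈ S, Ξ (e+1) i) *
      sE (e+1) (μ a) ((m:ℤ) - S.card - ((μ a : ℕ):ℤ) + ((d - e - 1 : ℕ):ℤ) + 1) with hsc
  have stepB : M'.det = ∑ m ∈ Finset.range N, ((Ξ e a)^m • v m
      |> M'.updateCol a |>.det) := by
    conv_lhs => rw [← Matrix.updateCol_eq_self M' a]
    have hcol : (fun i => M' i a) = fun i => ∑ m ∈ Finset.range N, ((Ξ e a)^m • v m) i := by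
      funext i
      simp only [M', Matrix.of_apply, haa, Fin.val_mk]
      rw [if_neg (by omega)]
      simp only [if_true]
      rw [hTi, hS_expand (Ξ e) haT N _ (by have := hNb i; omega)]
      simp only [hv, Pi.smul_apply, smul_eq_mul, haa]
    rw [hcol, ← det_updateCol_sum']
  have hpullh : ∀ k, pull e (hS (Ξ (e+1)) (T (e+1)) k) = hS (Ξ e) (T (e+1)) k := by
    intro k
    refine hS_map (pull e) _ _ _ (fun i hi => ?_) k
    have : e + 1 ≤ (i : ℕ) := by
      simpa only [hT, Finset.mem_filter, Finset.mem_univ, true_and] using hi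
    exact hΞ e i this
  have detC : ∀ m, (M'.updateCol a (v m)).det
      = pull e ((NB.updateCol a (w m)).det) := by
    intro m
    rw [RingHom.map_det]
    congr 1
    ext i j
    simp only [RingHom.mapMatrix_apply, Matrix.map_apply, Matrix.updateCol_apply]
    by_cases hj : j = a
    · rw [if_pos hj, if_pos hj, hw, hv]
      exact (hpullh _).symm
    · rw [if_neg hj, if_neg hj]
      have hje : (j : ℕ) ≠ e := by
        intro h; exact hj (Fin.ext (by simp [haa, h]))
      simp only [M', NB, Matrix.of_apply]
      by_cases hlt : (j : ℕ) < e
      · rw [if_pos hlt, if_pos hlt, hspull]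
      · rw [if_neg hlt, if_neg hlt, if_neg hje, hpullh]
  have hcard : ∀ S ∈ (T (e+1)).powerset, S.card ≤ d := by
    intro S _
    simpa using Finset.card_le_univ S
  -- main push computation
  have stepD : push e ((Mmat μ (Ξ e) (sE e) α e).det)
      = ∑ m ∈ Finset.range N, ∑ S ∈ (T (e+1)).powerset,
          ((NB.updateCol a (sc m S • w m)).det) := by
    rw [stepA, stepB, map_sum]
    refine Finset.sum_congr rfl fun m _ => ?_
    rw [Matrix.det_updateCol_smul, detC m, hproj, hGysin e he m]
    rw [Finset.sum_mul]
    refine Finset.sum_congr rfl fun S _ => ?_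
    rw [Matrix.det_updateCol_smul]
  -- identify the resulting column
  have colid : ∀ i : Fin d, (∑ m ∈ Finset.range N, ∑ S ∈ (T (e+1)).powerset,
        sc m S * w m i) = sE (e+1) (μ a) (c i + (d:ℤ) - ((μ a : ℕ):ℤ)) := by
    intro i
    rw [Finset.sum_comm]
    have inner : ∀ S ∈ (T (e+1)).powerset,
        ∑ m ∈ Finset.range N, sc m S * w m i
          = (-1 : B (e+1))^S.card * (∏ i' ∈ S, Ξ (e+1) i') *
            ∑ j ∈ Finset.range N,
              sE (e+1) (μ a) ((j:ℤ) - ((μ a : ℕ):ℤ) + ((d - e - 1 : ℕ):ℤ) + 1)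
                * w (j + S.card) i := by
      intro S hs
      have hshift : ∑ m ∈ Finset.range N,
            sE (e+1) (μ a) (((m:ℤ) - (S.card:ℤ)) - ((μ a : ℕ):ℤ) + ((d - e - 1 : ℕ):ℤ) + 1)
              * w m i
          = ∑ j ∈ Finset.range N,
            sE (e+1) (μ a) ((j:ℤ) - ((μ a : ℕ):ℤ) + ((d - e - 1 : ℕ):ℤ) + 1)
              * w (j + S.card) i :=
        shift_sum
          (fun t : ℤ => sE (e+1) (μ a) (t - ((μ a : ℕ):ℤ) + ((d - e - 1 : ℕ):ℤ) + 1))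
          (fun m => w m i) S.card N
          (fun t ht => hsneg _ _ _ (by omega))
          (fun m hm => by
            simp only [hw]
            refine hS_neg _ _ ?_
            have h1 := hNb i
            have h2 := hcard S hs
            omega)
      calc ∑ m ∈ Finset.range N, sc m S * w m i
          = ∑ m ∈ Finset.range N, ((-1 : B (e+1))^S.card * (∏ i' ∈ S, Ξ (e+1) i')) *
              (sE (e+1) (μ a)
                (((m:ℤ) - (S.card:ℤ)) - ((μ a : ℕ):ℤ) + ((d - e - 1 : ℕ):ℤ) + 1) * w m i) := by
            refine Finset.sum_congr rfl fun m _ => ?_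
            simp only [hsc]
            ring
        _ = ((-1 : B (e+1))^S.card * (∏ i' ∈ S, Ξ (e+1) i')) *
              ∑ m ∈ Finset.range N, sE (e+1) (μ a)
                (((m:ℤ) - (S.card:ℤ)) - ((μ a : ℕ):ℤ) + ((d - e - 1 : ℕ):ℤ) + 1) * w m i :=
            (Finset.mul_sum _ _ _).symm
        _ = _ := by rw [hshift]
    rw [Finset.sum_congr rfl inner]
    have swap2 : ∑ S ∈ (T (e+1)).powerset,
        ((-1 : B (e+1))^S.card * (∏ i' ∈ S, Ξ (e+1) i') *
          ∑ j ∈ Finset.range N,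
            sE (e+1) (μ a) ((j:ℤ) - ((μ a : ℕ):ℤ) + ((d - e - 1 : ℕ):ℤ) + 1)
              * w (j + S.card) i)
        = ∑ j ∈ Finset.range N,
            sE (e+1) (μ a) ((j:ℤ) - ((μ a : ℕ):ℤ) + ((d - e - 1 : ℕ):ℤ) + 1) *
              ∑ S ∈ (T (e+1)).powerset,
                (-1 : B (e+1))^S.card * (∏ i' ∈ S, Ξ (e+1) i') *
                  hS (Ξ (e+1)) (T (e+1)) ((c i + (e:ℤ) - (j:ℤ)) - (S.card : ℤ)) := by
      simp only [Finset.mul_sum]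
      rw [Finset.sum_comm]
      refine Finset.sum_congr rfl fun j _ => ?_
      refine Finset.sum_congr rfl fun S _ => ?_
      simp only [hw]
      have harg : c i + (e:ℤ) - ((j + S.card : ℕ):ℤ) = (c i + (e:ℤ) - (j:ℤ)) - (S.card:ℤ) := by
        push_cast; ring
      rw [harg]
      ring
    rw [swap2]
    have ehs : ∀ j ∈ Finset.range N,
        sE (e+1) (μ a) ((j:ℤ) - ((μ a : ℕ):ℤ) + ((d - e - 1 : ℕ):ℤ) + 1) *
            (∑ S ∈ (T (e+1)).powerset,
              (-1 : B (e+1))^S.card * (∏ i' ∈ S, Ξ (e+1) i') *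
                hS (Ξ (e+1)) (T (e+1)) ((c i + (e:ℤ) - (j:ℤ)) - (S.card : ℤ)))
          = if c i + (e:ℤ) - (j:ℤ) = 0
              then sE (e+1) (μ a) ((j:ℤ) - ((μ a : ℕ):ℤ) + ((d - e - 1 : ℕ):ℤ) + 1)
              else 0 := by
      intro j _
      rw [eh_identity (Ξ (e+1)) (T (e+1)) (c i + (e:ℤ) - (j:ℤ))]
      split_ifs <;> ring
    rw [Finset.sum_congr rfl ehs]
    by_cases hpos : 0 ≤ c i + (e:ℤ)
    · have hj0 : (c i + (e:ℤ)).toNat ∈ Finset.range N := by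
        rw [Finset.mem_range]
        have := hNb i
        omega
      rw [Finset.sum_eq_single_of_mem _ hj0]
      · rw [if_pos (by omega)]
        congr 1
        omega
      · intro j _ hj
        rw [if_neg (by omega)]
    · rw [Finset.sum_eq_zero, hsneg _ _ _ (by omega)]
      intro j _
      rw [if_neg (by omega)]
  -- conclude
  rw [stepD]
  have combine : ∑ m ∈ Finset.range N, ∑ S ∈ (T (e+1)).powerset,
        ((NB.updateCol a (sc m S • w m)).det)
      = (NB.updateCol a (fun i => ∑ m ∈ Finset.range N, ∑ S ∈ (T (e+1)).powerset,
          sc m S * w m i)).det := by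
    calc ∑ m ∈ Finset.range N, ∑ S ∈ (T (e+1)).powerset,
          ((NB.updateCol a (sc m S • w m)).det)
        = ∑ m ∈ Finset.range N, (NB.updateCol a
            (fun i => ∑ S ∈ (T (e+1)).powerset, sc m S * w m i)).det := by
          refine Finset.sum_congr rfl fun m _ => ?_
          exact det_updateCol_sum' NB a ((T (e+1)).powerset) (fun S => sc m S • w m)
      _ = _ :=
          det_updateCol_sum' NB a (Finset.range N)
            (fun m => fun i => ∑ S ∈ (T (e+1)).powerset, sc m S * w m i)
  rw [combine]
  have hcoleq : (fun i => ∑ m ∈ Finset.range N, ∑ S ∈ (T (e+1)).powerset, sc m S * w m i)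
      = fun i => sE (e+1) (μ a) (c i + (d:ℤ) - ((μ a : ℕ):ℤ)) := funext colid
  rw [hcoleq]
  congr 1
  ext i j
  simp only [Matrix.updateCol_apply, Mmat, NB, Matrix.of_apply, hceq, hTe]
  by_cases hj : j = a
  · subst hj
    rw [if_pos rfl, if_pos (show ((a : Fin d) : ℕ) < e + 1 by simp [haa])]
  · have hje : (j : ℕ) ≠ e := fun h => hj (Fin.ext (by simp [haa, h]))
    rw [if_neg hj]
    by_cases hlt : (j : ℕ) < e
    · rw [if_pos hlt, if_pos (by omega)]
    · rw [if_neg hlt, if_neg (by omega)]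

end main

/-- pushforward of Schur classes along Kempf–Laksov bundles. In the setting
of the Gysin formula for the Kempf–Laksov flag bundle `θ_μ : F_μ(E_•) → X` — realized as the
chain of projective bundles encoded in the hypotheses below, with `B 0 = A^•(F_μ(E_•))`,
`B d = A^•(X)`, Chern roots `Ξ 0` of `U^∨` and Segre classes `sE` of the flag `E_•` — for any
partition `α` with `d` parts,
`(θ_μ)_*(s_α(U)) = det( s_{α_i − i + d + 1 − μ_j}(E_{μ_j}) )_{1≤i,j≤d}` (written `0`-indexed). -/
theorem stmt15 (d n : ℕ)
    (μ : Fin d → ℕ) (hμstrict : StrictAnti μ) (hμpos : ∀ i, 1 ≤ μ i) (hμn : ∀ i, μ i ≤ n)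
    (B : ℕ → Type) [∀ e, CommRing (B e)]
    (pull : ∀ e, B (e + 1) →+* B e) (push : ∀ e, B e →+ B (e + 1))
    (hproj : ∀ e x y, push e (x * pull e y) = push e x * y)
    (Ξ : ∀ e, Fin d → B e)
    (hΞ : ∀ e, ∀ i : Fin d, e + 1 ≤ (i : ℕ) → pull e (Ξ (e + 1) i) = Ξ e i)
    (sE : ∀ e, ℕ → ℤ → B e)
    (hsneg : ∀ e m k, k < 0 → sE e m k = 0) (hs0 : ∀ e m, sE e m 0 = 1)
    (hspull : ∀ e m k, pull e (sE (e + 1) m k) = sE e m k)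
    (hGysin : ∀ (e : ℕ) (he : e < d) (k : ℕ),
      push e ((Ξ e ⟨e, he⟩) ^ k)
        = ∑ S ∈ (Finset.univ.filter (fun i : Fin d => e + 1 ≤ (i : ℕ))).powerset,
            (-1 : B (e + 1)) ^ S.card * (∏ i ∈ S, Ξ (e + 1) i) *
              sE (e + 1) (μ ⟨e, he⟩)
                ((k : ℤ) - S.card - ((μ ⟨e, he⟩ : ℕ) : ℤ) + ((d - e - 1 : ℕ) : ℤ) + 1))
    (α : Fin d → ℕ) (hα : Antitone α) :
    iterPush B push d
        (Matrix.det (Matrix.of fun i j : Fin d => hX d (Ξ 0) ((α i : ℤ) - (i : ℤ) + (j : ℤ))))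
      = Matrix.det (Matrix.of fun i j : Fin d =>
          sE d (μ j) ((α i : ℤ) - (i : ℤ) + (d : ℤ) - ((μ j : ℕ) : ℤ))) := by
  classical
  have key : ∀ e, e ≤ d →
      iterPush B push e ((Mmat μ (Ξ 0) (sE 0) α 0).det) = (Mmat μ (Ξ e) (sE e) α e).det := by
    intro e
    induction e with
    | zero => intro _; rfl
    | succ e ih =>
      intro hed
      have he : e < d := hed
      have hit : iterPush B push (e+1) ((Mmat μ (Ξ 0) (sE 0) α 0).det)
          = push e (iterPush B push e ((Mmat μ (Ξ 0) (sE 0) α 0).det)) := rfl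
      rw [hit, ih (le_of_lt he)]
      exact step_lemma d μ hμstrict hμpos B pull push hproj Ξ hΞ sE hsneg hspull hGysin α e he
  have base : (Matrix.of fun i j : Fin d => hX d (Ξ 0) ((α i : ℤ) - (i : ℤ) + (j : ℤ)))
      = Mmat μ (Ξ 0) (sE 0) α 0 := by
    ext i j
    simp only [Mmat, Matrix.of_apply]
    rw [if_neg (by omega)]
    rw [hX_eq_hS]
    congr 1
    ext i'
    simp
  have final : Mmat μ (Ξ d) (sE d) α d = Matrix.of (fun i j : Fin d =>
      sE d (μ j) ((α i : ℤ) - (i : ℤ) + (d : ℤ) - ((μ j : ℕ) : ℤ))) := by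
    ext i j
    simp only [Mmat, Matrix.of_apply]
    rw [if_pos j.isLt]
  rw [base, key d le_rfl, final]
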